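/- For the strong seed-bank urn chain with 0 < β < 1/4 and ε ∈ (0,1): if τ = τ(N) is geometric with parameter 1/N, independent of the chain, then there exist δ > 0 and N₀ such that for all N ≥ N₀ and all initial distributions μ on {0,...,N^β−1}, ‖P_μ(X_τ ∈ ·) − ν_N‖_TV ≤ N^{−(β+δ)}. -/

import Mathlib

open Matrix

/-- Transition kernel of the urn chain on `{0,...,M-1}` (with `M = N^β`). -/
def urnP (M : ℕ) (ε : ℝ) (i j : Fin M) : ℝ :=
  if i.val = 0 then
    (if j.val = 0 then 1 - ε else if j.val = M - 1 then ε else 0)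
  else if j.val + 1 = i.val then 1 else 0

/-- The urn chain as a transition matrix. -/
def urnMat (M : ℕ) (ε : ℝ) : Matrix (Fin M) (Fin M) ℝ := Matrix.of (urnP M ε)

/-- The stationary distribution `ν_N` of the urn chain. -/
noncomputable def urnNu (M : ℕ) (ε : ℝ) (k : Fin M) : ℝ :=
  ((if k.val + 1 ≤ 1 then 1 - ε else 0) + (if k.val + 1 ≤ M then ε else 0)) /
    (1 + ε * (M - 1))

/-- Total variation distance between two probability vectors on a finite state space. -/
noncomputable def tvDist {S : Type*} [Fintype S] (f g : S → ℝ) : ℝ :=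
  (∑ s, |f s - g s|) / 2

/-!
Write `G = ∑_{k ≥ 0} (1-p)^k p P^{k+1}` for the law of `X_τ`, `p = 1/N`. Stationarity of `ν`
for `P` passes to `G`, and since `μ` and `ν` have equal mass,
`μ G - ν G = ∑_i (μ_i - ν_i) (G_i - G_0)`. From state `i` the urn chain walks down to `0` in
exactly `i` steps, so the rows `G_i` and `G_0` differ only on `{τ ≤ i}`, an event of probability
at most `i p`. Hence the total variation is at most `2 N^β / N`, which is below
`N^{-(β + 1/4)}` for large `N` because `β < 1/4`.
-/

open Finset

lemma sum_abs_sub_le_of_eq_add {ι : Type*} [Fintype ι] {f g a : ι → ℝ} {t : ℝ}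
    (hf : ∑ j, f j = 1) (hg : ∑ j, g j = 1) (ha : ∀ j, 0 ≤ a j) (hg0 : ∀ j, 0 ≤ g j)
    (ht : t ≤ 1) (hfag : ∀ j, f j = a j + t * g j) :
    ∑ j, |f j - g j| ≤ 2 * (1 - t) := by
  have hsum_a : ∑ j, a j = 1 - t := by
    rw [← hf, ← mul_one t, ← hg, mul_sum, ← sum_sub_distrib]
    exact sum_congr rfl fun j _ => by rw [hfag]; ring
  calc ∑ j, |f j - g j| = ∑ j, |a j - (1 - t) * g j| :=
        sum_congr rfl fun j _ => by rw [hfag]; ring_nf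
    _ ≤ ∑ j, (a j + (1 - t) * g j) := by
        gcongr with j
        exact (abs_sub _ _).trans_eq <| by
          rw [abs_of_nonneg (ha j), abs_of_nonneg (mul_nonneg (by linarith) (hg0 j))]
    _ = 2 * (1 - t) := by rw [sum_add_distrib, ← mul_sum, hsum_a, hg]; ring

section TotalVariation

variable {S : Type*} [Fintype S]

lemma tvDist_le_one {μ ν : S → ℝ} (hμ0 : ∀ s, 0 ≤ μ s) (hμ1 : ∑ s, μ s = 1)
    (hν0 : ∀ s, 0 ≤ ν s) (hν1 : ∑ s, ν s = 1) : tvDist μ ν ≤ 1 := by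
  have : ∑ s, |μ s - ν s| ≤ ∑ s, (μ s + ν s) := by
    gcongr with s
    exact (abs_sub _ _).trans_eq <| by rw [abs_of_nonneg (hμ0 s), abs_of_nonneg (hν0 s)]
  rw [sum_add_distrib, hμ1, hν1] at this
  unfold tvDist
  linarith

lemma tvDist_vecMul_le {μ ν : S → ℝ} (hμν : ∑ s, μ s = ∑ s, ν s) (G : Matrix S S ℝ) (z : S)
    {c : ℝ} (hG : ∀ i, ∑ j, |G i j - G z j| ≤ c) :
    tvDist (μ ᵥ* G) (ν ᵥ* G) ≤ tvDist μ ν * c := by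
  -- as `μ` and `ν` have equal mass, row `z` may be subtracted from every row of `G`
  have hdiff (j : S) :
      (μ ᵥ* G) j - (ν ᵥ* G) j = ∑ i, (μ i - ν i) * (G i j - G z j) := by
    simp only [vecMul, dotProduct, mul_sub, sub_mul, sum_sub_distrib, ← sum_mul, hμν]
    ring
  have hl1 : ∑ j, |(μ ᵥ* G) j - (ν ᵥ* G) j| ≤ (∑ i, |μ i - ν i|) * c :=
    calc ∑ j, |(μ ᵥ* G) j - (ν ᵥ* G) j|
        ≤ ∑ j, ∑ i, |μ i - ν i| * |G i j - G z j| := by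
          gcongr with j
          rw [hdiff]
          exact (abs_sum_le_sum_abs _ _).trans_eq (sum_congr rfl fun i _ => abs_mul _ _)
      _ = ∑ i, |μ i - ν i| * ∑ j, |G i j - G z j| := by rw [sum_comm]; simp only [mul_sum]
      _ ≤ ∑ i, |μ i - ν i| * c := by gcongr with i; exact hG i
      _ = (∑ i, |μ i - ν i|) * c := (sum_mul _ _ _).symm
  unfold tvDist
  rw [div_mul_eq_mul_div]
  gcongr

end TotalVariation

namespace Matrix

variable {n : Type*} [Fintype n] [DecidableEq n]

/-- The law of `X_τ` for a chain with transition matrix `P` and `τ ∼ Geo(p)` on `{1, 2, ...}`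
independent of it, started at `i`. -/
noncomputable def geomTimeKernel (P : Matrix n n ℝ) (p : ℝ) : Matrix n n ℝ :=
  of fun i j => ∑' k : ℕ, (1 - p) ^ k * p * (P ^ (k + 1)) i j

lemma tsum_geometric_weight {p : ℝ} (hp0 : 0 < p) (hp1 : p ≤ 1) :
    ∑' k : ℕ, (1 - p) ^ k * p = 1 := by
  rw [tsum_mul_right, tsum_geometric_of_lt_one (by linarith) (by linarith), sub_sub_cancel,
    inv_mul_cancel₀ hp0.ne']

section Stochastic

variable {P : Matrix n n ℝ} {p : ℝ}

lemma summable_geomTimeKernel_term (hP : P ∈ rowStochastic ℝ n) (hp0 : 0 < p) (hp1 : p ≤ 1)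
    (i j : n) :
    Summable fun k : ℕ => (1 - p) ^ k * p * (P ^ (k + 1)) i j := by
  have hw (k : ℕ) : 0 ≤ (1 - p) ^ k * p := mul_nonneg (pow_nonneg (by linarith) k) hp0.le
  refine Summable.of_nonneg_of_le (fun k => mul_nonneg (hw k) ?_) (fun k => ?_)
    ((summable_geometric_of_lt_one (r := 1 - p) (by linarith) (by linarith)).mul_right p)
  · exact nonneg_of_mem_rowStochastic (pow_mem hP _)
  · exact mul_le_of_le_one_right (hw k) (le_one_of_mem_rowStochastic (pow_mem hP _))

lemma vecMul_geomTimeKernel (hP : P ∈ rowStochastic ℝ n) (hp0 : 0 < p) (hp1 : p ≤ 1)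
    (μ : n → ℝ) (j : n) :
    (μ ᵥ* geomTimeKernel P p) j = ∑' k : ℕ, (1 - p) ^ k * p * (μ ᵥ* P ^ (k + 1)) j := by
  simp only [vecMul, dotProduct, geomTimeKernel, of_apply, mul_sum, ← tsum_mul_left]
  rw [← Summable.tsum_finsetSum fun i _ =>
    (summable_geomTimeKernel_term hP hp0 hp1 i j).mul_left (μ i)]
  exact tsum_congr fun k => sum_congr rfl fun i _ => by ring

lemma geomTimeKernel_mem_rowStochastic (hP : P ∈ rowStochastic ℝ n)
    (hp0 : 0 < p) (hp1 : p ≤ 1) :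
    geomTimeKernel P p ∈ rowStochastic ℝ n := by
  refine mem_rowStochastic_iff_sum.2 ⟨fun i j => ?_, fun i => ?_⟩
  · exact tsum_nonneg fun k => mul_nonneg (mul_nonneg (pow_nonneg (by linarith) k) hp0.le)
      (nonneg_of_mem_rowStochastic (pow_mem hP _))
  · simp only [geomTimeKernel, of_apply]
    rw [← Summable.tsum_finsetSum fun j _ => summable_geomTimeKernel_term hP hp0 hp1 i j]
    simp only [← mul_sum, sum_row_of_mem_rowStochastic (pow_mem hP _), mul_one]
    exact tsum_geometric_weight hp0 hp1

lemma vecMul_geomTimeKernel_of_vecMul_eq (hP : P ∈ rowStochastic ℝ n) (hp0 : 0 < p)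
    (hp1 : p ≤ 1)     {ν : n → ℝ} (hν : ν ᵥ* P = ν) :
    ν ᵥ* geomTimeKernel P p = ν := by
  have hpow (k : ℕ) : ν ᵥ* P ^ k = ν := by
    induction k with
    | zero => exact vecMul_one ν
    | succ k ih => rw [pow_succ, ← vecMul_vecMul, ih, hν]
  funext j
  simp only [vecMul_geomTimeKernel hP hp0 hp1, hpow]
  rw [tsum_mul_right, tsum_geometric_weight hp0 hp1, one_mul]

/-- If the chain goes from `i` to `z` in `m` steps surely, the geometric time started at `i`
sees the law started at `z` except on the event `τ ≤ m`. -/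
lemma geomTimeKernel_apply_eq_add (hP : P ∈ rowStochastic ℝ n) (hp0 : 0 < p)
    (hp1 : p ≤ 1) {m : ℕ} {i z : n} (hm : (P ^ m) i = Pi.single z 1) (j : n) :
    geomTimeKernel P p i j = (∑ k ∈ range m, (1 - p) ^ k * p * (P ^ (k + 1)) i j)
      + (1 - p) ^ m * geomTimeKernel P p z j := by
  simp only [geomTimeKernel, of_apply]
  rw [← (summable_geomTimeKernel_term hP hp0 hp1 i j).sum_add_tsum_nat_add m, ← tsum_mul_left]
  congr 1
  refine tsum_congr fun k => ?_
  rw [show P ^ (k + m + 1) = P ^ m * P ^ (k + 1) by rw [← pow_add]; ring_nf,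
    mul_apply_eq_vecMul, hm, single_one_vecMul, pow_add]
  simp only [row]
  ring

lemma sum_abs_geomTimeKernel_sub_le (hP : P ∈ rowStochastic ℝ n) (hp0 : 0 < p)
    (hp1 : p ≤ 1) {m : ℕ} {i z : n} (hm : (P ^ m) i = Pi.single z 1) :
    ∑ j, |geomTimeKernel P p i j - geomTimeKernel P p z j| ≤ 2 * m * p := by
  have hG := geomTimeKernel_mem_rowStochastic hP hp0 hp1
  have hmix := sum_abs_sub_le_of_eq_add (sum_row_of_mem_rowStochastic hG i)
    (sum_row_of_mem_rowStochastic hG z)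
    (fun j => sum_nonneg fun k _ => mul_nonneg (mul_nonneg (pow_nonneg (by linarith) k) hp0.le)
      (nonneg_of_mem_rowStochastic (pow_mem hP _)))
    (fun j => nonneg_of_mem_rowStochastic hG) (pow_le_one₀ (by linarith) (by linarith))
    (geomTimeKernel_apply_eq_add hP hp0 hp1 hm)
  have hbernoulli : 1 - m * p ≤ (1 - p) ^ m := by
    simpa [sub_eq_add_neg] using one_add_mul_le_pow (a := -p) (by linarith) m
  linarith

end Stochastic

end Matrix

section Urn

variable {M : ℕ} {ε : ℝ}

lemma urnMat_apply_of_ne_zero {i : Fin M} (hi : i.val ≠ 0) :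
    urnMat M ε i = Pi.single ⟨i.val - 1, by omega⟩ 1 := by
  funext j
  simp only [urnMat, urnP, of_apply, hi, if_false, Pi.single_apply, Fin.ext_iff]
  congr 1
  grind

lemma urnMat_pow_val_apply_self (i : Fin M) :
    (urnMat M ε ^ i.val) i = Pi.single ⟨0, i.pos⟩ 1 := by
  obtain ⟨m, hm⟩ := i
  induction m with
  | zero => funext j; simp [one_apply, Pi.single_apply, Fin.ext_iff, eq_comm]
  | succ m ih =>
    rw [pow_succ', mul_apply_eq_vecMul, urnMat_apply_of_ne_zero (by simp), single_one_vecMul]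
    exact ih (by omega)

lemma urnMat_mem_rowStochastic (hM : 2 ≤ M) (hε0 : 0 ≤ ε) (hε1 : ε ≤ 1) :
    urnMat M ε ∈ rowStochastic ℝ (Fin M) := by
  refine mem_rowStochastic_iff_sum.2 ⟨fun i j => ?_, fun i => ?_⟩
  · simp only [urnMat, urnP, of_apply]
    split_ifs <;> linarith
  · by_cases hi : i.val = 0
    · rw [Fintype.sum_eq_add ⟨0, by omega⟩ ⟨M - 1, by omega⟩ (by simp [Fin.ext_iff]; omega)]
      · simp [urnMat, urnP, hi, show M - 1 ≠ 0 by omega]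
      · intro j hj
        simp_all [urnMat, urnP, Fin.ext_iff]
    · rw [urnMat_apply_of_ne_zero hi, Fintype.sum_pi_single']

lemma urnNu_apply (k : Fin M) :
    urnNu M ε k = ((if k.val = 0 then 1 - ε else 0) + ε) / (1 + ε * (M - 1)) := by
  simp [urnNu, k.isLt]

lemma urnNu_nonneg (hε0 : 0 ≤ ε) (hε1 : ε ≤ 1) (k : Fin M) : 0 ≤ urnNu M ε k := by
  rw [urnNu_apply]
  have : (1 : ℝ) ≤ M := by exact_mod_cast k.pos
  apply div_nonneg <;> [split_ifs; nlinarith] <;> linarith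

lemma sum_urnNu (hM : 0 < M) (hε0 : 0 ≤ ε) : ∑ k, urnNu M ε k = 1 := by
  have hD : (0 : ℝ) < 1 + ε * (M - 1) := by
    have : (1 : ℝ) ≤ M := by exact_mod_cast hM
    nlinarith
  simp only [urnNu_apply, ← sum_div, sum_add_distrib, sum_const, card_univ, Fintype.card_fin,
    nsmul_eq_mul]
  rw [Fintype.sum_eq_single ⟨0, hM⟩ (fun k hk => by simp_all [Fin.ext_iff]),
    div_eq_one_iff_eq hD.ne', if_pos rfl]
  ring

lemma urnNu_vecMul_urnMat (hM : 2 ≤ M) : urnNu M ε ᵥ* urnMat M ε = urnNu M ε := by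
  funext s
  simp only [vecMul, dotProduct]
  -- state `0` is entered from `0` and `1`, state `M - 1` from `0`, any other `s` from `s + 1`
  by_cases hs : s.val = 0
  · rw [Fintype.sum_eq_add ⟨0, by omega⟩ ⟨1, by omega⟩ (by simp [Fin.ext_iff])]
    · simp only [urnMat, urnP, urnNu_apply, of_apply, hs, one_ne_zero, if_true, if_false]
      ring
    · intro i hi
      simp_all [urnMat, urnP, Fin.ext_iff]
      omega
  · by_cases hlast : s.val = M - 1
    · rw [Fintype.sum_eq_single ⟨0, by omega⟩]
      · simp only [urnMat, urnP, urnNu_apply, of_apply, hlast, show M - 1 ≠ 0 by omega,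
          if_true, if_false]
        ring
      · intro i hi
        simp_all [urnMat, urnP, Fin.ext_iff]
        omega
    · rw [Fintype.sum_eq_single ⟨s.val + 1, by omega⟩]
      · simp [urnMat, urnP, urnNu_apply, hs]
      · intro i hi
        simp_all [urnMat, urnP, Fin.ext_iff]
        omega

lemma tvDist_urn_geomTime_le {p : ℝ} (hM : 2 ≤ M) (hε0 : 0 ≤ ε) (hε1 : ε ≤ 1)
    (hp0 : 0 < p) (hp1 : p ≤ 1) {μ : Fin M → ℝ} (hμ0 : ∀ i, 0 ≤ μ i) (hμ1 : ∑ i, μ i = 1) :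
    tvDist (fun s => ∑' k : ℕ, (1 - p) ^ k * p * (μ ᵥ* urnMat M ε ^ (k + 1)) s) (urnNu M ε)
      ≤ 2 * M * p := by
  have hP := urnMat_mem_rowStochastic hM hε0 hε1
  have hν1 := sum_urnNu (by omega : 0 < M) hε0
  have hlaw : (fun s => ∑' k : ℕ, (1 - p) ^ k * p * (μ ᵥ* urnMat M ε ^ (k + 1)) s)
      = μ ᵥ* geomTimeKernel (urnMat M ε) p :=
    funext fun s => (vecMul_geomTimeKernel hP hp0 hp1 μ s).symm
  rw [hlaw, ← vecMul_geomTimeKernel_of_vecMul_eq hP hp0 hp1 (urnNu_vecMul_urnMat hM)]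
  calc _ ≤ tvDist μ (urnNu M ε) * (2 * M * p) :=
        tvDist_vecMul_le (by rw [hμ1, hν1]) (geomTimeKernel (urnMat M ε) p) ⟨0, by omega⟩
          fun i => (sum_abs_geomTimeKernel_sub_le hP hp0 hp1 (urnMat_pow_val_apply_self i)).trans
            (by gcongr; exact i.isLt.le)
    _ ≤ 2 * M * p :=
        mul_le_of_le_one_left (by positivity) (tvDist_le_one hμ0 hμ1 (urnNu_nonneg hε0 hε1) hν1)

end Urn

lemma two_mul_rpow_div_le_rpow_neg {x β δ : ℝ} (hx : 0 < x) (h : 2 ≤ x ^ (1 - 2 * β - δ)) :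
    2 * x ^ β / x ≤ x ^ (-(β + δ)) := by
  have hsplit : x ^ (-(β + δ)) = x ^ β / x * x ^ (1 - 2 * β - δ) := by
    rw [← Real.rpow_sub_one hx.ne', ← Real.rpow_add hx]
    ring_nf
  rw [hsplit, mul_div_assoc, mul_comm]
  exact mul_le_mul_of_nonneg_left h (by positivity)

/-- Mixing at an independent geometric time: for `0 < β < 1/4`, if `τ ∼ Geo(1/N)` on
`{1,2,...}` is independent of the urn chain, then there exist `δ > 0` and `N₀` such that for
all `N ≥ N₀` and all initial distributions `μ₀` on `{0,...,N^β-1}`,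
`‖P_{μ₀}(X_τ ∈ ·) - ν_N‖_TV ≤ N^{-(β+δ)}`. The law of `X_τ` is
`∑_{k≥0} (1-1/N)^k (1/N) · μ₀ P^{k+1}`. -/
theorem urn_mixing_geometric_time (β ε : ℝ) (hβ : 0 < β) (hβ4 : β < 1 / 4)
    (hε : ε ∈ Set.Ioo (0:ℝ) 1) :
    ∃ δ > (0:ℝ), ∃ N₀ : ℕ, ∀ N : ℕ, N₀ ≤ N →
      ∀ μ₀ : Fin ⌊(N : ℝ) ^ β⌋₊ → ℝ, (∀ i, 0 ≤ μ₀ i) → ∑ i, μ₀ i = 1 →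
        tvDist
          (fun s => ∑' k : ℕ,
            (1 - 1 / (N : ℝ)) ^ k * (1 / (N : ℝ)) *
              (μ₀ ᵥ* (urnMat ⌊(N : ℝ) ^ β⌋₊ ε) ^ (k + 1)) s)
          (urnNu ⌊(N : ℝ) ^ β⌋₊ ε) ≤ (N : ℝ) ^ (-(β + δ)) := by
  have hlarge (γ : ℝ) (hγ : 0 < γ) : ∀ᶠ N : ℕ in Filter.atTop, 2 ≤ (N : ℝ) ^ γ :=
    ((tendsto_rpow_atTop hγ).comp tendsto_natCast_atTop_atTop).eventually_ge_atTop 2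
  obtain ⟨N₀, hN₀⟩ := Filter.eventually_atTop.1
    ((hlarge β hβ).and (hlarge (1 - 2 * β - 1 / 4) (by linarith)))
  refine ⟨1 / 4, by norm_num, N₀, fun N hN μ₀ hμ0 hμ1 => ?_⟩
  obtain ⟨hNβ, hNγ⟩ := hN₀ N hN
  have hN : (1 : ℝ) ≤ N := by
    by_contra! h
    have : (N : ℝ) ^ β < 1 := Real.rpow_lt_one (by positivity) h hβ
    linarith
  have hM : 2 ≤ ⌊(N : ℝ) ^ β⌋₊ := Nat.le_floor (by exact_mod_cast hNβ)
  calc _ ≤ 2 * ⌊(N : ℝ) ^ β⌋₊ * (1 / (N : ℝ)) :=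
        tvDist_urn_geomTime_le hM hε.1.le hε.2.le (by positivity)
          (div_le_one_of_le₀ hN (by positivity)) hμ0 hμ1
    _ ≤ 2 * (N : ℝ) ^ β / N := by
        rw [mul_one_div]
        gcongr
        exact Nat.floor_le (by positivity)
    _ ≤ (N : ℝ) ^ (-(β + 1 / 4)) := two_mul_rpow_div_le_rpow_neg (by positivity) hNγ
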